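/- For every typed DAG task G, the NEW-B-2 bound is at most the NEW-B-1 bound: max_{π} [ len(π) + Σ_{s} Σ_{v∈ivs(π,s)} c(v)/M_s ] ≤ len(Ĝ) + Σ_{s} vol_s(G)/M_s. -/

import Mathlib

open MeasureTheory

namespace TypedSched

/-- A typed DAG task: directed edges `E`, type function `γ`, WCET function `c`,
and designated source and sink vertices. -/
structure TypedDAG (V S : Type) where
  E : V → V → Prop
  γ : V → S
  c : V → ℝ
  src : V
  snk : V

variable {V S : Type}

/-- Strict ancestors of `v`. -/
def anc (G : TypedDAG V S) (v : V) : Set V := {u | Relation.TransGen G.E u v}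

/-- Strict descendants of `v`. -/
def des (G : TypedDAG V S) (v : V) : Set V := {u | Relation.TransGen G.E v u}

/-- `par v`: vertices of the same type as `v` that are neither ancestors nor
descendants of `v` (and distinct from `v`). -/
def par (G : TypedDAG V S) (v : V) : Set V :=
  {u | u ≠ v ∧ G.γ u = G.γ v ∧ u ∉ anc G v ∧ u ∉ des G v}

def Acyclic (G : TypedDAG V S) : Prop := ∀ v, ¬ Relation.TransGen G.E v v

def WeightsNonneg (G : TypedDAG V S) : Prop := ∀ v, 0 ≤ G.c v

def IsPath (G : TypedDAG V S) (π : List V) : Prop := π ≠ [] ∧ π.Chain' G.E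

/-- A complete path goes from the source to the sink. -/
def IsCompletePath (G : TypedDAG V S) (π : List V) : Prop :=
  IsPath G π ∧ π.head? = some G.src ∧ π.getLast? = some G.snk

/-- Length of a path: total WCET of its vertices. -/
def len (G : TypedDAG V S) (π : List V) : ℝ := (π.map G.c).sum

/-- `len(G)`: length of the longest complete path. -/
noncomputable def lenG (G : TypedDAG V S) : ℝ :=
  sSup {x : ℝ | ∃ π : List V, IsCompletePath G π ∧ x = len G π}

/-- The scaled graph `Ĝ` with `ĉ(v) = c(v)·(1 − 1/M_{γ(v)})`. -/
noncomputable def scaled (G : TypedDAG V S) (M : S → ℕ) : TypedDAG V S :=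
  { G with c := fun v => G.c v * (1 - 1 / (M (G.γ v) : ℝ)) }

/-- `vol_s(G)`: total WCET of type-`s` vertices. -/
noncomputable def vol (G : TypedDAG V S) (s : S) : ℝ := ∑ᶠ v ∈ {v : V | G.γ v = s}, G.c v

/-- `ivs(π, s)`: interference set of the path `π` for type `s`. -/
def ivs (G : TypedDAG V S) (π : List V) (s : S) : Set V :=
  ⋃ τ ∈ {τ : V | τ ∈ π ∧ G.γ τ = s}, par G τ

/-- Sum of WCETs of type-`s` vertices on a path. -/
def pathTypeSum [DecidableEq S] (G : TypedDAG V S) (π : List V) (s : S) : ℝ :=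
  ((π.filter (fun v => decide (G.γ v = s))).map G.c).sum

/-- The NEW-B-1 bound. -/
noncomputable def newB1 [Fintype S] (G : TypedDAG V S) (M : S → ℕ) : ℝ :=
  lenG (scaled G M) + ∑ s : S, vol G s / (M s : ℝ)

/-- The OLD-B bound. -/
noncomputable def oldB [Fintype S] (G : TypedDAG V S) (M : S → ℕ) : ℝ :=
  (1 - 1 / ((Finset.univ.sup M : ℕ) : ℝ)) * lenG G + ∑ s : S, vol G s / (M s : ℝ)

/-- Per-path bound `R̃(π)` used by NEW-B-2. -/
noncomputable def Rtilde [Fintype S] (G : TypedDAG V S) (M : S → ℕ) (π : List V) : ℝ :=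
  len G π + ∑ s : S, (∑ᶠ v ∈ ivs G π s, G.c v) / (M s : ℝ)

/-- The NEW-B-2 bound. -/
noncomputable def newB2 [Fintype S] (G : TypedDAG V S) (M : S → ℕ) : ℝ :=
  sSup {x : ℝ | ∃ π : List V, IsCompletePath G π ∧ x = Rtilde G M π}

/-- An execution sequence of `G` under a work-conserving scheduler on a platform
with `M s` cores of each type `s`.  `exec v` is the set of time instants at which
`v` executes, and `f v` is its finish time. -/
structure ExecSeq (G : TypedDAG V S) (M : S → ℕ) where
  exec : V → Set ℝ
  f : V → ℝ
  meas : ∀ v, MeasurableSet (exec v)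
  /-- each vertex executes for at most its WCET -/
  dur_le : ∀ v, (volume (exec v)).toReal ≤ G.c v
  exec_nonneg : ∀ v, exec v ⊆ Set.Ici 0
  exec_lt_finish : ∀ v, exec v ⊆ Set.Iio (f v)
  f_nonneg : ∀ v, 0 ≤ f v
  /-- precedence: a vertex may execute only after all its predecessors finished -/
  prec : ∀ u v, G.E u v → exec v ⊆ Set.Ici (f u)
  /-- at any instant at most `M s` vertices of type `s` are executing -/
  cores : ∀ (s : S) (t : ℝ), {v : V | G.γ v = s ∧ t ∈ exec v}.ncard ≤ M s
  /-- work conservation: if an eligible unfinished vertex does not execute at `t`,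
  all cores of its type are busy -/
  work_conserving : ∀ (v : V) (t : ℝ), 0 ≤ t → t < f v →
    (∀ u, G.E u v → f u ≤ t) → t ∉ exec v →
    {u : V | G.γ u = G.γ v ∧ t ∈ exec u}.ncard = M (G.γ v)

/-- A critical path: a complete path on which each vertex is a
latest-finishing predecessor of the next one. -/
def IsCriticalPath (G : TypedDAG V S) {M : S → ℕ} (ex : ExecSeq G M) (π : List V) : Prop :=
  IsCompletePath G π ∧
  ∀ p ∈ π.zip π.tail, ∀ w, G.E w p.2 → ex.f w ≤ ex.f p.1

/-- `X_s`: total time during which type-`s` critical-path vertices execute inside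
their windows (the window of `τ_i` is `[f(τ_{i-1}), f(τ_i))`, with `f(τ_0) = 0`). -/
noncomputable def Xs [DecidableEq S] (G : TypedDAG V S) {M : S → ℕ} (ex : ExecSeq G M)
    (π : List V) (s : S) : ℝ :=
  ((π.zip ((0:ℝ) :: π.map ex.f)).map fun p =>
    if G.γ p.1 = s then (volume (ex.exec p.1 ∩ Set.Ico p.2 (ex.f p.1))).toReal else 0).sum

/-- `Y_s`: total time during which type-`s` critical-path vertices are not executing
inside their windows. -/
noncomputable def Ys [DecidableEq S] (G : TypedDAG V S) {M : S → ℕ} (ex : ExecSeq G M)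
    (π : List V) (s : S) : ℝ :=
  ((π.zip ((0:ℝ) :: π.map ex.f)).map fun p =>
    if G.γ p.1 = s then (volume ((Set.Ico p.2 (ex.f p.1)) \ ex.exec p.1)).toReal else 0).sum

/-! Vertices of a path are pairwise comparable, so the interference set `ivs π s` avoids the
type-`s` vertices of `π`, and its weight is at most `vol_s` minus their weight. Dividing by `M_s`
and summing over `s`, `R̃(π)` is at most `len π - Σ_{v ∈ π} c v / M_{γ v} + Σ_s vol_s / M_s`, and
the first two terms are the length of `π` in `Ĝ`, since `ĉ v = c v - c v / M_{γ v}`. -/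

section Paths

variable {G : TypedDAG V S} {π : List V}

lemma pairwise_transGen_of_isChain (h : π.IsChain G.E) : π.Pairwise (Relation.TransGen G.E) :=
  have : IsTrans V (Relation.TransGen G.E) := ⟨fun _ _ _ => Relation.TransGen.trans⟩
  List.isChain_iff_pairwise.mp (h.imp fun _ _ => Relation.TransGen.single)

lemma nodup_of_isChain (hacyc : Acyclic G) (h : π.IsChain G.E) : π.Nodup :=
  (pairwise_transGen_of_isChain h).imp fun {a _} hab heq => by subst heq; exact hacyc a hab

lemma transGen_or_transGen_of_isChain (h : π.IsChain G.E) {u v : V} (hu : u ∈ π) (hv : v ∈ π)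
    (hne : u ≠ v) : Relation.TransGen G.E u v ∨ Relation.TransGen G.E v u :=
  let R a b := Relation.TransGen G.E a b ∨ Relation.TransGen G.E b a
  have : Std.Symm R := ⟨fun _ _ => Or.symm⟩
  have hR : π.Pairwise R := (pairwise_transGen_of_isChain h).imp Or.inl
  hR.forall hu hv hne

lemma ivs_subset_of_isChain (h : π.IsChain G.E) (s : S) :
    ivs G π s ⊆ {v | G.γ v = s} \ {v | v ∈ π} := by
  simp only [ivs, Set.iUnion_subset_iff]
  rintro τ ⟨hτ, rfl⟩ v ⟨hne, hγ, hanc, hdes⟩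
  exact ⟨hγ, fun hv => (transGen_or_transGen_of_isChain h hv hτ hne).elim hanc hdes⟩

end Paths

section Sums

variable [DecidableEq S] (G : TypedDAG V S) {π : List V}

lemma vol_eq_sum [Fintype V] (s : S) : vol G s = ∑ v with G.γ v = s, G.c v := by
  classical
  rw [vol, finsum_mem_eq_toFinset_sum, Set.toFinset_ofPred]

lemma pathTypeSum_eq_sum [DecidableEq V] (hπ : π.Nodup) (s : S) :
    pathTypeSum G π s = ∑ v ∈ π.toFinset with G.γ v = s, G.c v := by
  rw [pathTypeSum, ← List.sum_toFinset _ (hπ.filter _), List.toFinset_filter]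
  simp

lemma pathTypeSum_cons (a : V) (π : List V) (s : S) :
    pathTypeSum G (a :: π) s = (if G.γ a = s then G.c a else 0) + pathTypeSum G π s := by
  unfold pathTypeSum
  split_ifs <;> simp [*]

lemma len_scaled [Fintype S] (M : S → ℕ) (π : List V) :
    len (scaled G M) π = len G π - ∑ s, pathTypeSum G π s / M s := by
  induction π with
  | nil => simp [len, pathTypeSum]
  | cons a π ih =>
    simp only [len, List.map_cons, List.sum_cons] at ih ⊢
    simp only [pathTypeSum_cons, add_div, Finset.sum_add_distrib, ite_div, zero_div,
      Finset.sum_ite_eq, Finset.mem_univ, if_true, ih]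
    simp only [scaled]
    ring

lemma finsum_ivs_le_vol_sub_pathTypeSum [Fintype V] (hc : WeightsNonneg G)
    (hπ : π.IsChain G.E) (hnd : π.Nodup) (s : S) :
    ∑ᶠ v ∈ ivs G π s, G.c v ≤ vol G s - pathTypeSum G π s := by
  classical
  have hsub : {v ∈ π.toFinset | G.γ v = s} ⊆ ({v | G.γ v = s} : Finset V) :=
    Finset.monotone_filter_left _ (Finset.subset_univ _)
  rw [vol_eq_sum, pathTypeSum_eq_sum G hnd, finsum_mem_eq_toFinset_sum,
    ← Finset.sum_sdiff_eq_sub hsub]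
  refine Finset.sum_le_sum_of_subset_of_nonneg (fun v hv => ?_) fun v _ _ => hc v
  obtain ⟨hγ, hvπ⟩ : G.γ v = s ∧ v ∉ π :=
    ivs_subset_of_isChain hπ s (Set.mem_toFinset.mp hv)
  simp [hγ, hvπ]

end Sums

section Bounds

variable {G : TypedDAG V S} {π : List V}

lemma WeightsNonneg.scaled (hc : WeightsNonneg G) (M : S → ℕ) : WeightsNonneg (scaled G M) :=
  fun v => mul_nonneg (hc v) (Nat.one_sub_one_div_cast_nonneg _)

lemma len_nonneg (hc : WeightsNonneg G) (π : List V) : 0 ≤ len G π :=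
  List.sum_nonneg (by simpa using fun v _ => hc v)

lemma len_le_sum_univ [Fintype V] (hc : WeightsNonneg G) (hnd : π.Nodup) :
    len G π ≤ ∑ v, G.c v := by
  classical
  rw [len, ← List.sum_toFinset _ hnd]
  exact Finset.sum_le_sum_of_subset_of_nonneg (Finset.subset_univ _) fun v _ _ => hc v

lemma len_le_lenG [Fintype V] (hc : WeightsNonneg G) (hacyc : Acyclic G)
    (hπ : IsCompletePath G π) : len G π ≤ lenG G := by
  refine le_csSup ⟨∑ v, G.c v, ?_⟩ ⟨π, hπ, rfl⟩
  rintro _ ⟨ρ, hρ, rfl⟩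
  exact len_le_sum_univ hc (nodup_of_isChain hacyc hρ.1.2)

lemma lenG_nonneg (hc : WeightsNonneg G) : 0 ≤ lenG G :=
  Real.sSup_nonneg <| by rintro _ ⟨π, -, rfl⟩; exact len_nonneg hc π

lemma vol_nonneg [Fintype V] (hc : WeightsNonneg G) (s : S) : 0 ≤ vol G s := by
  classical
  rw [vol_eq_sum]
  exact Finset.sum_nonneg fun v _ => hc v

lemma newB1_nonneg [Fintype V] [Fintype S] (hc : WeightsNonneg G) (M : S → ℕ) :
    0 ≤ newB1 G M :=
  add_nonneg (lenG_nonneg (hc.scaled M))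
    (Finset.sum_nonneg fun s _ => div_nonneg (vol_nonneg hc s) (Nat.cast_nonneg _))

lemma Rtilde_le_newB1 [Fintype V] [Fintype S] (hc : WeightsNonneg G) (hacyc : Acyclic G)
    (M : S → ℕ) (hπ : IsCompletePath G π) : Rtilde G M π ≤ newB1 G M := by
  classical
  have hnd := nodup_of_isChain hacyc hπ.1.2
  calc Rtilde G M π
      ≤ len G π + ∑ s, (vol G s - pathTypeSum G π s) / M s := by
        unfold Rtilde
        gcongr with s
        exact finsum_ivs_le_vol_sub_pathTypeSum G hc hπ.1.2 hnd s
    _ = len (scaled G M) π + ∑ s, vol G s / M s := by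
        simp only [len_scaled, sub_div, Finset.sum_sub_distrib]
        ring
    _ ≤ newB1 G M := by
        unfold newB1
        gcongr
        exact len_le_lenG (hc.scaled M) hacyc hπ

end Bounds

theorem stmt8_general {V S : Type} [Fintype V] [Fintype S]
    (G : TypedDAG V S) (M : S → ℕ)
    (hc : WeightsNonneg G) (hacyc : Acyclic G) :
    newB2 G M ≤ newB1 G M :=
  -- `newB1_nonneg` covers the case without complete paths, where `newB2 G M = sSup ∅ = 0`.
  Real.sSup_le (by rintro _ ⟨π, hπ, rfl⟩; exact Rtilde_le_newB1 hc hacyc M hπ)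
    (newB1_nonneg hc M)

/-- NEW-B-2 is always at most NEW-B-1. -/
theorem stmt8 {V S : Type} [Fintype V] [Fintype S]
    (G : TypedDAG V S) (M : S → ℕ) (hM : ∀ s, 1 ≤ M s)
    (hc : WeightsNonneg G) (hacyc : Acyclic G) :
    newB2 G M ≤ newB1 G M :=
  stmt8_general G M hc hacyc

end TypedSched
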